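/- arXiv:1406.5035 — 3 statements merged into one kernel-verified Lean document; each statement's English description precedes it below -/
import Mathlib

section
/- For any n×n torus image I (with wraparound adjacency), the quadratic local discrepancy is at most twice the quadratic global discrepancy: LD₂(I) ≤ 2·GD₂(I), when n is even. -/
/-- For an `n × n` torus image (pixels indexed by `(ℤ/n)²`, adjacency with
wraparound) with `n` even, the quadratic local discrepancy (average of
`(x_p - x_q)²` over the `2n²` adjacent pairs) is at most twice the quadratic
global discrepancy. -/
theorem stmt6 (n : ℕ) [NeZero n] (hn : Even n) (x : ZMod n × ZMod n → ℝ)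
    (hx : ∀ p, x p ∈ Set.Icc (0:ℝ) 1) :
    (1 / (2 * (n:ℝ)^2)) *
        ∑ p : ZMod n × ZMod n,
          ((x p - x (p.1 + 1, p.2))^2 + (x p - x (p.1, p.2 + 1))^2)
      ≤ 2 * ((1 / (n:ℝ)^4) *
          ∑ p : ZMod n × ZMod n, ∑ q : ZMod n × ZMod n, (x p - x q)^2) := by
  have hn0 : (0:ℝ) < (n:ℝ) := by exact_mod_cast Nat.pos_of_ne_zero (NeZero.ne n)
  set N : ℝ := (n:ℝ)^2 with hN
  have hN0 : 0 < N := by positivity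
  have hcard : ((Finset.univ : Finset (ZMod n × ZMod n)).card : ℝ) = N := by
    simp [Finset.card_univ, ZMod.card, hN]
    ring
  set S := ∑ p : ZMod n × ZMod n, x p with hS
  set Q := ∑ p : ZMod n × ZMod n, (x p)^2 with hQ
  set L := ∑ p : ZMod n × ZMod n,
      ((x p - x (p.1 + 1, p.2))^2 + (x p - x (p.1, p.2 + 1))^2) with hL
  -- global sum identity
  have hG : (∑ p : ZMod n × ZMod n, ∑ q : ZMod n × ZMod n, (x p - x q)^2)
      = 2*N*Q - 2*S^2 := by
    have h1 : ∀ p q : ZMod n × ZMod n,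
        (x p - x q)^2 = (x p)^2 - 2*(x p * x q) + (x q)^2 := by intro p q; ring
    simp_rw [h1, Finset.sum_add_distrib, Finset.sum_sub_distrib, Finset.sum_const,
      ← Finset.mul_sum, ← Finset.sum_mul, nsmul_eq_mul, hcard]
    rw [← Finset.mul_sum, ← hS, ← hQ]
    ring
  -- shift sums
  have hshift : ∀ e : ZMod n × ZMod n,
      ∑ p : ZMod n × ZMod n, (N * x (p + e) - S)^2
        = ∑ p : ZMod n × ZMod n, (N * x p - S)^2 := by
    intro e
    exact Fintype.sum_equiv (Equiv.addRight e) _ _ (fun p => rfl)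
  have hcsum : ∑ p : ZMod n × ZMod n, (N * x p - S)^2 = N^2*Q - N*S^2 := by
    have h1 : ∀ p : ZMod n × ZMod n,
        (N * x p - S)^2 = N^2*(x p)^2 - 2*N*S*(x p) + S^2 := by intro p; ring
    simp_rw [h1, Finset.sum_add_distrib, Finset.sum_sub_distrib, Finset.sum_const,
      ← Finset.mul_sum, nsmul_eq_mul, hcard]
    rw [← hS, ← hQ]
    ring
  -- bound each shifted edge sum
  have hbound : ∀ e : ZMod n × ZMod n,
      N^2 * ∑ p : ZMod n × ZMod n, (x p - x (p + e))^2 ≤ 4*(N^2*Q - N*S^2) := by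
    intro e
    rw [Finset.mul_sum]
    calc ∑ p : ZMod n × ZMod n, N^2 * (x p - x (p + e))^2
        ≤ ∑ p : ZMod n × ZMod n, (2*(N * x p - S)^2 + 2*(N * x (p + e) - S)^2) := by
          apply Finset.sum_le_sum
          intro p _
          nlinarith [sq_nonneg (N * x p + N * x (p + e) - 2*S)]
      _ = 4*(N^2*Q - N*S^2) := by
          rw [Finset.sum_add_distrib, ← Finset.mul_sum, ← Finset.mul_sum,
            hshift e, hcsum]
          ring
  -- rewrite L's shifts as p + e
  have hL' : L = (∑ p : ZMod n × ZMod n, (x p - x (p + (1,0)))^2)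
      + (∑ p : ZMod n × ZMod n, (x p - x (p + (0,1)))^2) := by
    rw [hL, Finset.sum_add_distrib]
    congr 1 <;> apply Finset.sum_congr rfl <;> intro p _ <;>
      obtain ⟨a, b⟩ := p <;> simp [Prod.mk_add_mk]
  have hkey : N^2 * L ≤ 8*(N^2*Q - N*S^2) := by
    have h1 := hbound (1,0)
    have h2 := hbound (0,1)
    rw [hL']
    nlinarith
  have hNL : N * L ≤ 8*N*Q - 8*S^2 := by nlinarith
  rw [hG]
  have hn4 : (n:ℝ)^4 = N^2 := by rw [hN]; ring
  rw [hn4]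
  have hdiff : (1/(2*N))*L - 2*((1/N^2)*(2*N*Q - 2*S^2))
      = (N*L - (8*N*Q - 8*S^2)) / (2*N^2) := by
    field_simp
    ring
  have : (N*L - (8*N*Q - 8*S^2)) / (2*N^2) ≤ 0 :=
    div_nonpos_of_nonpos_of_nonneg (by linarith) (by positivity)
  linarith [hdiff ▸ this]
end

section
/- There exists an n×n image I with GD₂(I) = Ω(1) and LD₂(I) = O(1/n²): namely, the image where every pixel in row i has value i/n. -/
/-! For any finite family, `∑ᵢ ∑ⱼ (fᵢ - fⱼ)² = 2 (N ∑ fᵢ² - (∑ fᵢ)²)`; with the sums of `i`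
and `i²` this gives `GD₂ = (n² - 1) / (6 n²)` exactly for the row image, which is `≥ 1/8` once
`n ≥ 2`. Adjacent pixels lie at most one row apart, so every term averaged in `LD₂` is at most
`1 / n²`. -/

/-- Grid adjacency on an `n × n` image. -/
def adj (n : ℕ) (p q : Fin n × Fin n) : Prop :=
  (p.1 = q.1 ∧ ((p.2 : ℕ) + 1 = (q.2 : ℕ) ∨ (q.2 : ℕ) + 1 = (p.2 : ℕ))) ∨
  (p.2 = q.2 ∧ ((p.1 : ℕ) + 1 = (q.1 : ℕ) ∨ (q.1 : ℕ) + 1 = (p.1 : ℕ)))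

instance (n : ℕ) : DecidableRel (adj n) := fun p q => by unfold adj; infer_instance

/-- The set of neighbors of a pixel `p`. -/
def nbrs (n : ℕ) (p : Fin n × Fin n) : Finset (Fin n × Fin n) :=
  Finset.univ.filter (adj n p)

/-- The quadratic local discrepancy: the average of `(x_p - x_q)²` over
adjacent pairs. -/
noncomputable def LD2 (n : ℕ) (x : Fin n × Fin n → ℝ) : ℝ :=
  (∑ p : Fin n × Fin n, ((nbrs n p).card : ℝ))⁻¹ *
    ∑ p, ∑ q ∈ nbrs n p, (x p - x q)^2

open Finset

lemma Finset.sum_sum_sub_sq {ι R : Type*} [CommRing R] (s : Finset ι) (f : ι → R) :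
    ∑ i ∈ s, ∑ j ∈ s, (f i - f j) ^ 2 =
      2 * (#s * ∑ i ∈ s, f i ^ 2 - (∑ i ∈ s, f i) ^ 2) := by
  simp only [sub_sq, sum_add_distrib, sum_sub_distrib, sum_const, nsmul_eq_mul,
    ← mul_sum, ← sum_mul]
  ring

lemma Finset.sum_range_cast_mul_two {R : Type*} [CommRing R] (n : ℕ) :
    (∑ i ∈ range n, (i : R)) * 2 = n * (n - 1) := by
  induction n with
  | zero => simp
  | succ k ih => rw [sum_range_succ, add_mul, ih]; push_cast; ring

lemma Finset.sum_range_cast_sq_mul_six {R : Type*} [CommRing R] (n : ℕ) :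
    (∑ i ∈ range n, (i : R) ^ 2) * 6 = n * (n - 1) * (2 * n - 1) := by
  induction n with
  | zero => simp
  | succ k ih => rw [sum_range_succ, add_mul, ih]; push_cast; ring

noncomputable def GD2 (n : ℕ) (x : Fin n × Fin n → ℝ) : ℝ :=
  1 / (n : ℝ) ^ 4 * ∑ p, ∑ q, (x p - x q) ^ 2

noncomputable def rowImage (n : ℕ) (p : Fin n × Fin n) : ℝ :=
  ((p.1 : ℕ) : ℝ) / n

lemma GD2_rowImage {n : ℕ} (hn : n ≠ 0) :
    GD2 n (rowImage n) = ((n : ℝ) ^ 2 - 1) / (6 * (n : ℝ) ^ 2) := by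
  have sum_fst (g : Fin n → ℝ) : ∑ p : Fin n × Fin n, g p.1 = n * ∑ i, g i := by
    simp [Fintype.sum_prod_type, mul_sum]
  have h₁ : ∑ p, rowImage n p = n * (n - 1) / 2 :=
    calc ∑ p, rowImage n p = n * ∑ i : Fin n, ((i : ℕ) : ℝ) / n :=
      sum_fst fun i => ((i : ℕ) : ℝ) / n
      _ = ∑ i ∈ range n, (i : ℝ) := by
        rw [mul_sum, ← Fin.sum_univ_eq_sum_range (fun i => (i : ℝ))]
        exact sum_congr rfl fun i _ => by field_simp
      _ = n * (n - 1) / 2 := eq_div_of_mul_eq two_ne_zero (sum_range_cast_mul_two n)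
  have h₂ : ∑ p, rowImage n p ^ 2 = (n - 1) * (2 * n - 1) / 6 :=
    calc ∑ p, rowImage n p ^ 2 = n * ∑ i : Fin n, (((i : ℕ) : ℝ) / n) ^ 2 :=
      sum_fst fun i => (((i : ℕ) : ℝ) / n) ^ 2
      _ = (∑ i ∈ range n, (i : ℝ) ^ 2) / n := by
        rw [mul_sum, sum_div, ← Fin.sum_univ_eq_sum_range (fun i => (i : ℝ) ^ 2 / n)]
        exact sum_congr rfl fun i _ => by field_simp
      _ = (n - 1) * (2 * n - 1) / 6 := by
        rw [eq_div_of_mul_eq (by norm_num) (sum_range_cast_sq_mul_six (R := ℝ) n)]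
        field_simp
  rw [GD2, sum_sum_sub_sq, card_univ, Fintype.card_prod, Fintype.card_fin, h₁, h₂]
  field_simp
  push_cast
  ring

lemma LD2_le_of_forall_adj {n : ℕ} (x : Fin n × Fin n → ℝ) {C : ℝ} (hC : 0 ≤ C)
    (h : ∀ p q, adj n p q → (x p - x q) ^ 2 ≤ C) : LD2 n x ≤ C := by
  set T := ∑ p : Fin n × Fin n, ((nbrs n p).card : ℝ)
  have hsum : ∑ p, ∑ q ∈ nbrs n p, (x p - x q) ^ 2 ≤ T * C := by
    rw [sum_mul]
    gcongr with p
    simpa using sum_le_card_nsmul (nbrs n p) _ C fun q hq => h p q (mem_filter.mp hq).2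
  change T⁻¹ * _ ≤ C
  rcases (show 0 ≤ T by positivity).eq_or_lt with hT | hT
  · simp [← hT, hC]
  · exact (inv_mul_le_iff₀ hT).mpr hsum

lemma sq_sub_fst_le_one_of_adj {n : ℕ} {p q : Fin n × Fin n} (h : adj n p q) :
    (((p.1 : ℕ) : ℝ) - (q.1 : ℕ)) ^ 2 ≤ 1 := by
  rcases h with ⟨h, -⟩ | ⟨-, h | h⟩
  · simp [h]
  · rw [← h]; push_cast; norm_num
  · rw [← h]; push_cast; norm_num

lemma LD2_rowImage_le (n : ℕ) : LD2 n (rowImage n) ≤ 1 / (n : ℝ) ^ 2 :=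
  LD2_le_of_forall_adj _ (by positivity) fun p q h => by
    rw [rowImage, rowImage, div_sub_div_same, div_pow]
    exact div_le_div_of_nonneg_right (sq_sub_fst_le_one_of_adj h) (by positivity)

/-- The image in which every pixel in row `i` has value `i/n` has
`GD₂ = Ω(1)` and `LD₂ = O(1/n²)`. -/
theorem stmt9 : ∃ c₁ : ℝ, 0 < c₁ ∧ ∃ c₂ : ℝ, 0 < c₂ ∧ ∀ n : ℕ, 2 ≤ n →
    ((1 / (n:ℝ)^4) * ∑ p : Fin n × Fin n, ∑ q : Fin n × Fin n,
        (((p.1 : ℕ) : ℝ)/n - ((q.1 : ℕ) : ℝ)/n)^2 ≥ c₁) ∧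
    LD2 n (fun p => ((p.1 : ℕ) : ℝ)/n) ≤ c₂ / (n:ℝ)^2 := by
  refine ⟨1 / 8, by norm_num, 1, one_pos, fun n hn => ⟨?_, LD2_rowImage_le n⟩⟩
  change GD2 n (rowImage n) ≥ 1 / 8
  have hn' : (2 : ℝ) ≤ n := by exact_mod_cast hn
  rw [GD2_rowImage (by omega), ge_iff_le, le_div_iff₀ (by positivity)]
  nlinarith
end

section
/- Consider the optimization: maximize Σ_{i≥0} √(x_i) over nonnegative sequences (x_i) with Σ x_i ≤ 1 and, for every i, 2α·x_i ≥ Σ_{j=i}^{i+m−1} x_j (where m = log n > 2α > 2). Then the geometric sequence x_i = (1−p)p^i, where p ∈ (0,1) solves (1−p^m)/(1−p) = 2α, is a feasible solution achieving objective value (1+√p)/√(1−p), and no feasible sequence achieves a larger value. -/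
/-!
With tails `T i = ∑_{j ≥ i} x j`, the window constraint reads
`T i - T (i + m) ≤ σ (T i - T (i + 1))` with `σ = 1 + p + ⋯ + p^(m-1)`. For finitely supported
`x`, downward induction turns this into `T (i + 1) ≤ p T i`, so `T i ≤ pⁱ`. Abel summation then
gives `∑ x i / √p ^ i ≤ 1 + √p`, and Cauchy–Schwarz against the weights `√p ^ i` bounds
`∑ √(x i)` by `(1 + √p) / √(1 - p)`. General sequences are handled through their truncations,
and the geometric sequence meets every constraint with equality.
-/

open Finset

theorem succ_le_mul_of_window_le {p : ℝ} (hp : 0 ≤ p) {m N : ℕ} (hm : 2 ≤ m) {T : ℕ → ℝ}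
    (hT : ∀ i, N ≤ i → T i = 0)
    (hw : ∀ i, T i - T (i + m) ≤ (∑ k ∈ range m, p ^ k) * (T i - T (i + 1))) (i : ℕ) :
    T (i + 1) ≤ p * T i := by
  obtain ⟨n, rfl⟩ : ∃ n, m = n + 2 := ⟨m - 2, by omega⟩
  set τ := ∑ k ∈ range (n + 1), p ^ k
  have hτ : 1 ≤ τ := by
    simpa using single_le_sum (fun k _ => pow_nonneg hp k) (mem_range.mpr n.succ_pos)
  have hσ₁ : ∑ k ∈ range (n + 2), p ^ k = p * τ + 1 := geom_sum_succ
  have hσ₂ : ∑ k ∈ range (n + 2), p ^ k = p ^ (n + 1) + τ := geom_sum_succ'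
  -- `σ = 1 + p τ = p ^ (m - 1) + τ`: once `T (j + 1) ≤ p T j` for all `j > k`, the window
  -- constraint at `k` becomes `τ T (k + 1) ≤ p τ T k`.
  refine Nat.decreasingInduction (motive := fun k _ => ∀ j, k ≤ j → T (j + 1) ≤ p * T j)
    (fun k _ ih j hj => ?_) (fun j hj => ?_) (Nat.zero_le N) i (Nat.zero_le i)
  · rcases hj.lt_or_eq with hj | rfl
    · exact ih j hj
    have hchain : T (k + 1 + (n + 1)) ≤ p ^ (n + 1) * T (k + 1) :=
      le_geom (u := fun t => T (k + 1 + t)) hp (n + 1) fun t _ => ih (k + 1 + t) (by omega)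
    rw [show k + 1 + (n + 1) = k + (n + 2) by omega] at hchain
    have : τ * (T (k + 1) - p * T k) ≤ 0 := by
      linear_combination hw k + hchain + T k * hσ₁ - T (k + 1) * hσ₂
    linarith [nonpos_of_mul_nonpos_right this (by linarith)]
  · rw [hT j hj, hT (j + 1) (by omega), mul_zero]

theorem sum_range_sub_div_pow_le {q : ℝ} (hq0 : 0 < q) (hq1 : q ≤ 1) {T : ℕ → ℝ}
    (hT0 : ∀ i, 0 ≤ T i) (hT : ∀ i, T i ≤ (q ^ 2) ^ i) (n : ℕ) :
    ∑ i ∈ range n, (T i - T (i + 1)) / q ^ i ≤ 1 + q := by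
  have hpartial : ∀ n,
      ∑ i ∈ range n, (T i - T (i + 1)) / q ^ i + T n / q ^ n ≤ 1 + q - q ^ (n + 1) := by
    intro n
    induction n with
    | zero => simpa using hT 0
    | succ n ih =>
      have hstep : T (n + 1) * (1 - q) / q ^ (n + 1) ≤ q ^ (n + 1) * (1 - q) := by
        rw [div_le_iff₀ (by positivity)]
        calc T (n + 1) * (1 - q) ≤ (q ^ 2) ^ (n + 1) * (1 - q) :=
              mul_le_mul_of_nonneg_right (hT _) (by linarith)
          _ = q ^ (n + 1) * (1 - q) * q ^ (n + 1) := by ring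
      rw [sum_range_succ]
      calc _ = ∑ i ∈ range n, (T i - T (i + 1)) / q ^ i + T n / q ^ n
            + T (n + 1) * (1 - q) / q ^ (n + 1) := by field_simp; ring
        _ ≤ 1 + q - q ^ (n + 1 + 1) := by linear_combination ih + hstep
  have hTn : 0 ≤ T n / q ^ n := div_nonneg (hT0 n) (by positivity)
  linarith [hpartial n, pow_pos hq0 (n + 1)]

theorem sum_sqrt_le_of_sum_div_pow_le {q : ℝ} (hq0 : 0 < q) (hq1 : q < 1) {x : ℕ → ℝ}
    (hx : ∀ i, 0 ≤ x i) {n : ℕ} (h : ∑ i ∈ range n, x i / q ^ i ≤ 1 + q) :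
    ∑ i ∈ range n, √(x i) ≤ (1 + q) / √(1 - q ^ 2) := by
  have hgeom : ∑ i ∈ range n, q ^ i ≤ (1 - q)⁻¹ := by
    simpa using geom_sum_Ico_le_of_lt_one (m := 0) (n := n) hq0.le hq1
  have hbound : √(1 - q)⁻¹ * √(1 + q) = (1 + q) / √(1 - q ^ 2) := by
    have hq : 1 - q ≠ 0 := by linarith
    rw [eq_div_iff (Real.sqrt_pos.mpr (by nlinarith)).ne', ← Real.sqrt_mul (by positivity),
      ← Real.sqrt_mul (by positivity),
      show (1 - q)⁻¹ * (1 + q) * (1 - q ^ 2) = (1 + q) ^ 2 by field_simp; ring,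
      Real.sqrt_sq (by positivity)]
  calc ∑ i ∈ range n, √(x i) = ∑ i ∈ range n, √(q ^ i) * √(x i / q ^ i) := by
        refine sum_congr rfl fun i _ => ?_
        rw [← Real.sqrt_mul (by positivity), mul_div_cancel₀ _ (by positivity)]
    _ ≤ √(∑ i ∈ range n, q ^ i) * √(∑ i ∈ range n, x i / q ^ i) :=
        Real.sum_sqrt_mul_sqrt_le _ (fun i => by positivity)
          fun i => div_nonneg (hx i) (by positivity)
    _ ≤ √(1 - q)⁻¹ * √(1 + q) := by gcongr
    _ = (1 + q) / √(1 - q ^ 2) := hbound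

theorem sum_range_sqrt_le_of_window_le {p : ℝ} (hp0 : 0 < p) (hp1 : p < 1) {m N : ℕ}
    (hm : 2 ≤ m) {x : ℕ → ℝ} (hx : ∀ i, 0 ≤ x i) (hN : ∀ i, N ≤ i → x i = 0)
    (h1 : ∑ i ∈ range N, x i ≤ 1)
    (hw : ∀ i, ∑ j ∈ Ico i (i + m), x j ≤ (∑ k ∈ range m, p ^ k) * x i) :
    ∑ i ∈ range N, √(x i) ≤ (1 + √p) / √(1 - p) := by
  -- the tail `∑_{j ≥ i} x j`, since `x` vanishes from `N` on
  set T : ℕ → ℝ := fun i => ∑ j ∈ range N, x (i + j)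
  have hTx : ∀ i, T i - T (i + 1) = x i := by
    intro i
    have h := (sum_range_succ (fun j => x (i + j)) N).symm.trans (sum_range_succ' _ N)
    simp only [hN (i + N) (by omega), add_zero, ← add_assoc, add_right_comm i _ 1] at h
    simp only [T]
    linarith
  have hwindow : ∀ i, ∑ j ∈ Ico i (i + m), x j = T i - T (i + m) := by
    intro i
    have h := sum_range_sub' (fun k => T (i + k)) m
    simp only [add_zero, ← add_assoc, hTx] at h
    rwa [sum_Ico_eq_sum_range, add_tsub_cancel_left]
  have hdecay : ∀ i, T (i + 1) ≤ p * T i := by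
    refine succ_le_mul_of_window_le hp0.le hm (N := N) (fun i hi => ?_) fun i => ?_
    · exact sum_eq_zero fun j _ => hN _ (by omega)
    · rw [← hwindow, hTx]
      exact hw i
  have hT : ∀ i, T i ≤ (√p ^ 2) ^ i := by
    intro i
    calc T i ≤ p ^ i * T 0 := le_geom hp0.le i fun k _ => hdecay k
      _ ≤ p ^ i := by simpa [T] using mul_le_of_le_one_right (by positivity) h1
      _ = (√p ^ 2) ^ i := by rw [Real.sq_sqrt hp0.le]
  have hq1 : √p < 1 := by rw [Real.sqrt_lt' one_pos]; linarith
  have hweighted := sum_range_sub_div_pow_le (T := T) (Real.sqrt_pos.mpr hp0) hq1.le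
    (fun i => sum_nonneg fun j _ => hx (i + j)) hT N
  simp only [hTx] at hweighted
  simpa [Real.sq_sqrt hp0.le] using
    sum_sqrt_le_of_sum_div_pow_le (Real.sqrt_pos.mpr hp0) hq1 hx hweighted

theorem tsum_sqrt_le_of_window_le {p : ℝ} (hp0 : 0 < p) (hp1 : p < 1) {m : ℕ} (hm : 2 ≤ m)
    {x : ℕ → ℝ} (hx : ∀ i, 0 ≤ x i) (hsum : Summable x) (h1 : ∑' i, x i ≤ 1)
    (hw : ∀ i, ∑ j ∈ Ico i (i + m), x j ≤ (∑ k ∈ range m, p ^ k) * x i) :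
    ∑' i, √(x i) ≤ (1 + √p) / √(1 - p) := by
  refine Real.tsum_le_of_sum_range_le (fun _ => Real.sqrt_nonneg _) fun N => ?_
  set y : ℕ → ℝ := fun j => if j < N then x j else 0
  have hyx : ∀ j, j < N → y j = x j := fun j hj => if_pos hj
  have hyN : ∀ j, N ≤ j → y j = 0 := fun j hj => if_neg (by omega)
  have hy0 : ∀ j, 0 ≤ y j := fun j => by by_cases hj : j < N <;> simp [y, hj, hx j]
  have hy : ∀ j, y j ≤ x j := fun j => by by_cases hj : j < N <;> simp [y, hj, hx j]
  have hrange : ∀ f : ℝ → ℝ, ∑ j ∈ range N, f (y j) = ∑ j ∈ range N, f (x j) :=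
    fun f => sum_congr rfl fun j hj => by rw [hyx j (mem_range.mp hj)]
  have hy1 : ∑ j ∈ range N, y j ≤ 1 :=
    (hrange id).trans_le ((hsum.sum_le_tsum _ fun j _ => hx j).trans h1)
  have hyw : ∀ i, ∑ j ∈ Ico i (i + m), y j ≤ (∑ k ∈ range m, p ^ k) * y i := by
    intro i
    by_cases hi : i < N
    · rw [hyx i hi]
      exact (sum_le_sum fun j _ => hy j).trans (hw i)
    · rw [hyN i (by omega), mul_zero]
      exact (sum_eq_zero fun j hj => hyN j (by simp at hj; omega)).le
  rw [← hrange]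
  exact sum_range_sqrt_le_of_window_le hp0 hp1 hm hy0 hyN hy1 hyw

theorem sum_Ico_window_mul_pow {R : Type*} [CommSemiring R] (c p : R) (i m : ℕ) :
    ∑ j ∈ Ico i (i + m), c * p ^ j = (∑ k ∈ range m, p ^ k) * (c * p ^ i) := by
  rw [sum_Ico_eq_sum_range, add_tsub_cancel_left, sum_mul]
  exact sum_congr rfl fun k _ => by ring

theorem tsum_sqrt_mul_geometric {p : ℝ} (hp0 : 0 ≤ p) (hp1 : p < 1) :
    ∑' i : ℕ, √((1 - p) * p ^ i) = (1 + √p) / √(1 - p) := by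
  have hq1 : √p < 1 := by rw [Real.sqrt_lt' one_pos]; linarith
  have hpow : ∀ i : ℕ, √(p ^ i) = √p ^ i := fun i =>
    (Real.sqrt_eq_iff_eq_sq (by positivity) (by positivity)).mpr
      (by rw [← pow_mul, mul_comm, pow_mul, Real.sq_sqrt hp0])
  have hfactor : 1 - p = (1 - √p) * (1 + √p) := by
    linear_combination Real.sq_sqrt hp0
  have hq : 1 - √p ≠ 0 := by linarith
  simp only [Real.sqrt_mul (sub_nonneg.mpr hp1.le), hpow]
  rw [tsum_mul_left, tsum_geometric_of_lt_one (Real.sqrt_nonneg p) hq1,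
    eq_div_iff (Real.sqrt_pos.mpr (sub_pos.mpr hp1)).ne', mul_right_comm,
    Real.mul_self_sqrt (sub_nonneg.mpr hp1.le), hfactor]
  field_simp

/-- Maximize `∑_{i≥0} √(x_i)` over nonnegative sequences with `∑ x_i ≤ 1` and
`2α·x_i ≥ ∑_{j=i}^{i+m-1} x_j` for all `i` (where `m = log n > 2α`, `α > 1`):
the geometric sequence `x_i = (1-p)pⁱ`, where `p ∈ (0,1)` solves
`(1-pᵐ)/(1-p) = 2α`, is feasible, achieves objective value `(1+√p)/√(1-p)`,
and no feasible sequence achieves a larger value. -/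
theorem stmt16 (α : ℝ) (m : ℕ) (hα : 1 < α) (hm : 2*α < (m:ℝ))
    (p : ℝ) (hp : p ∈ Set.Ioo (0:ℝ) 1) (hpeq : (1 - p^m) / (1 - p) = 2*α) :
    -- the geometric sequence is feasible
    ((∀ i : ℕ, 0 ≤ (1 - p) * p^i) ∧
      Summable (fun i : ℕ => (1 - p) * p^i) ∧
      (∑' i : ℕ, (1 - p) * p^i) ≤ 1 ∧
      (∀ i : ℕ, (∑ j ∈ Finset.Ico i (i + m), (1 - p) * p^j) ≤ 2*α*((1 - p) * p^i))) ∧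
    -- it achieves objective value (1+√p)/√(1-p)
    (∑' i : ℕ, Real.sqrt ((1 - p) * p^i)) = (1 + Real.sqrt p) / Real.sqrt (1 - p) ∧
    -- and it is optimal
    (∀ x : ℕ → ℝ, (∀ i, 0 ≤ x i) → Summable x → (∑' i, x i) ≤ 1 →
      (∀ i : ℕ, (∑ j ∈ Finset.Ico i (i + m), x j) ≤ 2*α*(x i)) →
      (∑' i, Real.sqrt (x i)) ≤ (1 + Real.sqrt p) / Real.sqrt (1 - p)) := by
  obtain ⟨hp0, hp1⟩ := hp
  have hm2 : 2 ≤ m := by exact_mod_cast (by linarith : (2 : ℝ) ≤ m)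
  have hσ : ∑ k ∈ range m, p ^ k = 2 * α := by
    rw [geom_sum_eq hp1.ne, ← hpeq, ← neg_div_neg_eq, neg_sub, neg_sub]
  refine ⟨⟨fun i => by positivity, (summable_geometric_of_lt_one hp0.le hp1).mul_left _, ?_,
    fun i => by rw [sum_Ico_window_mul_pow, hσ]⟩, tsum_sqrt_mul_geometric hp0.le hp1,
    fun x hx hsum h1 hw => tsum_sqrt_le_of_window_le hp0 hp1 hm2 hx hsum h1 (hσ ▸ hw)⟩
  rw [tsum_mul_left, tsum_geometric_of_lt_one hp0.le hp1, mul_inv_cancel₀ (by linarith)]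
end
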